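/- Let q ≥ 1, G(z) a q×1 column vector, H(z) a 1×q row vector, and V(z) a q×1 column vector over R = ℝ[z,z⁻¹]. Define B(z) := 1 − H(z)G(z), A_LP(z) := [H(z); I_q − G(z)H(z)], and S_LP(z) := [G(z) + V(z)B(z), I_q − V(z)H(z)]. Then S_LP(z)·A_LP(z) = I_q. -/
import Mathlib


open LaurentPolynomial Matrix

/-- Perfect reconstruction of the general Laplacian pyramid synthesis operator:
with `B(z) = 1 - H(z)G(z)`, `A_LP(z) = [H(z); I_q - G(z)H(z)]` and
`S_LP(z) = [G(z) + V(z)B(z), I_q - V(z)H(z)]`, one has `S_LP(z) · A_LP(z) = I_q`. -/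
theorem LP_general_PR (q : ℕ) (hq : 1 ≤ q)
    (G V : Matrix (Fin q) (Fin 1) (LaurentPolynomial ℝ))
    (H : Matrix (Fin 1) (Fin q) (LaurentPolynomial ℝ))
    (B : LaurentPolynomial ℝ) (hB : B = 1 - (H * G) 0 0)
    (A_LP : Matrix (Fin (q + 1)) (Fin q) (LaurentPolynomial ℝ))
    (S_LP : Matrix (Fin q) (Fin (q + 1)) (LaurentPolynomial ℝ))
    (hA : A_LP = Matrix.of (Fin.cons (fun j => H 0 j)
      (fun i j => ((1 : Matrix (Fin q) (Fin q) (LaurentPolynomial ℝ)) - G * H) i j)))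
    (hS : S_LP = Matrix.of (fun i => Fin.cons (G i 0 + V i 0 * B)
      (fun j => ((1 : Matrix (Fin q) (Fin q) (LaurentPolynomial ℝ)) - V * H) i j))) :
    S_LP * A_LP = 1 := by
  subst hA hS hB
  refine Matrix.ext fun i j => ?_
  rw [Matrix.mul_apply, Fin.sum_univ_succ]
  simp only [Matrix.of_apply, Fin.cons_zero, Fin.cons_succ]
  have hsum : ∑ k : Fin q, ((1 : Matrix (Fin q) (Fin q) (LaurentPolynomial ℝ)) - V * H) i k *
      ((1 : Matrix (Fin q) (Fin q) (LaurentPolynomial ℝ)) - G * H) k j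
      = (((1 : Matrix (Fin q) (Fin q) (LaurentPolynomial ℝ)) - V * H) *
        ((1 : Matrix (Fin q) (Fin q) (LaurentPolynomial ℝ)) - G * H)) i j := by
    rw [Matrix.mul_apply]
  rw [hsum]
  have hexp : ((1 : Matrix (Fin q) (Fin q) (LaurentPolynomial ℝ)) - V * H) *
        ((1 : Matrix (Fin q) (Fin q) (LaurentPolynomial ℝ)) - G * H)
      = 1 - G * H - V * H + V * (H * G) * H := by
    have : V * H * (G * H) = V * (H * G) * H := by
      rw [← Matrix.mul_assoc, Matrix.mul_assoc V H G]
    noncomm_ring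
    rw [this]
  rw [hexp]
  simp only [Matrix.add_apply, Matrix.sub_apply, Matrix.mul_apply, Fin.sum_univ_one,
    Matrix.one_apply]
  rcases eq_or_ne i j with rfl | h
  · simp only [if_pos rfl]; ring
  · simp only [if_neg h]; ring
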